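/- arXiv:1610.04486 — 2 statements merged into one kernel-verified Lean document; each statement's English description precedes it below -/
import Mathlib

section
/- Let Γ = (V,E) be a finite multigraph with an orientation of its edges, and let G be a finite abelian group of order n. The number of nowhere-zero G-flows of Γ (functions φ : E → G∖{0} such that at each vertex the sum of values on outgoing edges equals the sum on incoming edges) equals Σ_{A ⊆ E} (−1)^{|E∖A|} n^{|A| − |V| + k(A)}, where k(A) is the number of connected components of the spanning subgraph (V, A). -/
structure Multigraph (V E : Type*) where
  tail : E → V
  head : E → V

def Multigraph.subgraph {V E : Type*} (Γ : Multigraph V E) (A : Finset E) : SimpleGraph V where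
  Adj v w := v ≠ w ∧ ∃ e ∈ A, (Γ.tail e = v ∧ Γ.head e = w) ∨ (Γ.tail e = w ∧ Γ.head e = v)
  symm := by
    constructor
    intro a b h
    obtain ⟨h1, e, he, h2⟩ := h
    exact ⟨h1.symm, e, he, h2.symm⟩
  loopless := by constructor; intro a h; exact h.1 rfl

noncomputable def Multigraph.k {V E : Type*} (Γ : Multigraph V E) (A : Finset E) : ℕ :=
  Nat.card (Γ.subgraph A).ConnectedComponent

/-!
The flows supported on an edge set `A` are the kernel of the boundary map `G^A → G^V`. Its
image consists of the vertex weightings with zero sum on every component of `(V, A)`: an edge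
`e` maps `x` to `δ_tail x - δ_head x`, and along a walk these differences add up to
`δ_v x - δ_w x` for any two vertices of one component. Counting kernel and image gives
`n ^ (|A| + k(A) - |V|)` flows supported on `A`, and inclusion–exclusion over the set of edges
where a flow vanishes turns these counts into the number of nowhere-zero flows.
-/

open Finset

lemma AddMonoidHom.card_ker_mul_card_range {G H : Type*} [AddGroup G] [AddGroup H]
    (f : G →+ H) : Nat.card f.ker * Nat.card f.range = Nat.card G :=
  AddSubgroup.index_ker f ▸ f.ker.card_mul_index

lemma Nat.eq_pow_sub_of_mul_pow_eq {n a b x : ℕ} (hn : n ≠ 0) (h : x * n ^ a = n ^ b) :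
    x = n ^ (b - a) := by
  rcases (Nat.one_le_iff_ne_zero.2 hn).eq_or_lt with rfl | hn
  · simpa using h
  · have hab : a ≤ b := (Nat.pow_dvd_pow_iff_le_right hn).1 (Dvd.intro_left x h)
    rw [← Nat.sub_add_cancel hab, pow_add] at h
    exact Nat.eq_of_mul_eq_mul_right (by positivity) h

lemma card_forall_ne_zero_eq_sum {E M : Type*} [Fintype E] [Finite M] [Zero M]
    (P : (E → M) → Prop) :
    (Nat.card {φ : E → M // (∀ e, φ e ≠ 0) ∧ P φ} : ℤ) =
      ∑ A : Finset E, (-1 : ℤ) ^ (Fintype.card E - A.card) *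
        Nat.card {φ : E → M // (∀ e ∉ A, φ e = 0) ∧ P φ} := by
  classical
  have := Fintype.ofFinite M
  have h := inclusion_exclusion_sum_inf_compl univ
    (fun e => ({φ | φ e = 0} : Finset (E → M))) (fun φ => if P φ then (1 : ℤ) else 0)
  have hinf (t : Finset E) : t.inf (fun e => ({φ | φ e = 0} : Finset (E → M))) =
      ({φ | ∀ e ∈ t, φ e = 0} : Finset (E → M)) := by
    ext; simp [mem_inf]
  have hinf_compl : univ.inf (fun e => ({φ | φ e = 0} : Finset (E → M))ᶜ) =
      ({φ | ∀ e, φ e ≠ 0} : Finset (E → M)) := by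
    ext; simp [mem_inf]
  simp only [sum_boole, powerset_univ, hinf, hinf_compl, filter_filter] at h
  simp only [Nat.card_eq_fintype_card, Fintype.card_subtype]
  rw [h]
  refine Fintype.sum_bijective compl compl_bijective _ _ fun A => ?_
  rw [card_compl, Nat.sub_sub_self (card_le_univ A), zsmul_eq_mul]
  simp

def supportedOn {E : Type*} (G : Type*) [AddGroup G] (A : Finset E) : AddSubgroup (E → G) :=
  AddSubgroup.pi (↑A)ᶜ fun _ => ⊥

section supportedOn

variable {E G : Type*} [AddGroup G] {A : Finset E}

lemma mem_supportedOn {φ : E → G} : φ ∈ supportedOn G A ↔ ∀ e ∉ A, φ e = 0 := by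
  simp [supportedOn, AddSubgroup.mem_pi]

lemma single_mem_supportedOn [DecidableEq E] {e : E} (he : e ∈ A) (x : G) :
    Pi.single e x ∈ supportedOn G A :=
  mem_supportedOn.2 fun _ he' =>
    Pi.single_eq_of_ne (ne_of_mem_of_not_mem he he').symm (M := fun _ => G) x

lemma supportedOn_le [Finite E] [DecidableEq E] {K : AddSubgroup (E → G)}
    (hK : ∀ e ∈ A, ∀ x : G, Pi.single e x ∈ K) : supportedOn G A ≤ K := by
  intro φ hφ
  refine AddSubgroup.pi_mem_of_single_mem φ fun e => ?_
  by_cases he : e ∈ A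
  · exact hK e he _
  · rw [mem_supportedOn.1 hφ e he, Pi.single_zero]
    exact zero_mem K

lemma card_supportedOn [Fintype E] [Finite G] :
    Nat.card (supportedOn G A) = Nat.card G ^ A.card := by
  classical
  have := Fintype.ofFinite G
  have hpi : ({φ | φ ∈ supportedOn G A} : Finset (E → G)) =
      Fintype.piFinset fun e => if e ∈ A then univ else {0} := by
    ext φ
    simp only [mem_filter, mem_univ, true_and, mem_supportedOn, Fintype.mem_piFinset]
    refine forall_congr' fun e => ?_
    split_ifs with he <;> simp [he]
  rw [Nat.card_eq_fintype_card, Fintype.card_subtype, hpi, Fintype.card_piFinset]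
  simp [apply_ite, prod_ite_mem, Nat.card_eq_fintype_card]

end supportedOn

namespace SimpleGraph

variable {V G : Type*} [AddCommGroup G]

lemma single_sub_single_mem_of_reachable [DecidableEq V] {H : SimpleGraph V}
    {K : AddSubgroup (V → G)}
    (hK : ∀ v w, H.Adj v w → ∀ x : G, Pi.single v x - Pi.single w x ∈ K) {v w : V}
    (h : H.Reachable v w) (x : G) : Pi.single v x - Pi.single w x ∈ K := by
  obtain ⟨p⟩ := h
  induction p with
  | nil => simp
  | cons hadj _ ih => simpa using add_mem (hK _ _ hadj x) ih

variable [Fintype V] (H : SimpleGraph V) (G)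

open scoped Classical in
noncomputable def componentSum : (V → G) →+ (H.ConnectedComponent → G) where
  toFun g c := ∑ v with H.connectedComponentMk v = c, g v
  map_zero' := by ext; simp
  map_add' g g' := by ext; simp [sum_add_distrib]

open scoped Classical

variable [DecidableEq V]

lemma componentSum_single (v : V) (x : G) :
    H.componentSum G (Pi.single v x) = Pi.single (H.connectedComponentMk v) x := by
  ext c
  simp [componentSum, Pi.single_apply, eq_comm]

lemma componentSum_surjective : Function.Surjective (H.componentSum G) := by
  have := Fintype.ofFinite H.ConnectedComponent
  intro h
  refine ⟨∑ c, Pi.single c.out (h c), ?_⟩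
  have hout (c : H.ConnectedComponent) : H.connectedComponentMk c.out = c := c.out_eq
  simp only [map_sum, componentSum_single, hout, univ_sum_single]

variable {H G}

lemma ker_componentSum_le {K : AddSubgroup (V → G)}
    (hK : ∀ v w, H.Adj v w → ∀ x : G, Pi.single v x - Pi.single w x ∈ K) :
    (H.componentSum G).ker ≤ K := by
  have := Fintype.ofFinite H.ConnectedComponent
  intro g hg
  set rep : V → V := fun v => (H.connectedComponentMk v).out
  have hrep : ∑ v, (Pi.single (rep v) (g v) : V → G) = 0 := by
    rw [← sum_fiberwise univ H.connectedComponentMk]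
    refine sum_eq_zero fun c _ => ?_
    calc ∑ v with H.connectedComponentMk v = c, (Pi.single (rep v) (g v) : V → G)
        = ∑ v with H.connectedComponentMk v = c, Pi.single c.out (g v) :=
          sum_congr rfl fun v hv => by rw [← (mem_filter.1 hv).2]
      _ = Pi.single c.out (H.componentSum G g c) :=
          (map_sum (AddMonoidHom.single (fun _ : V => G) c.out) _ _).symm
      _ = 0 := by rw [AddMonoidHom.mem_ker.1 hg, Pi.zero_apply, Pi.single_zero]
  have hg' : g = ∑ v, (Pi.single v (g v) - Pi.single (rep v) (g v)) := by
    rw [sum_sub_distrib, hrep, sub_zero, univ_sum_single]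
  rw [hg']
  exact sum_mem fun v _ => single_sub_single_mem_of_reachable hK
    (ConnectedComponent.exact (Quot.out_eq _).symm) _

end SimpleGraph

namespace Multigraph

variable {V E : Type*} {Γ : Multigraph V E}

lemma connectedComponentMk_tail_eq_head {A : Finset E} {e : E} (he : e ∈ A) :
    (Γ.subgraph A).connectedComponentMk (Γ.tail e) =
      (Γ.subgraph A).connectedComponentMk (Γ.head e) := by
  by_cases h : Γ.tail e = Γ.head e
  · rw [h]
  · exact SimpleGraph.ConnectedComponent.connectedComponentMk_eq_of_adj
      ⟨h, e, he, Or.inl ⟨rfl, rfl⟩⟩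

variable [Fintype E] [DecidableEq V] (Γ) (G : Type*) [AddCommGroup G]

def boundary : (E → G) →+ (V → G) where
  toFun φ v := ∑ e with Γ.tail e = v, φ e - ∑ e with Γ.head e = v, φ e
  map_zero' := by ext; simp
  map_add' φ ψ := by ext; simp only [Pi.add_apply, sum_add_distrib]; abel

variable {Γ G}

lemma boundary_eq_zero_iff {φ : E → G} : Γ.boundary G φ = 0 ↔ ∀ v : V,
    ∑ e with Γ.tail e = v, φ e = ∑ e with Γ.head e = v, φ e := by
  simp [funext_iff, boundary, sub_eq_zero]

lemma boundary_single [DecidableEq E] (e : E) (x : G) :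
    Γ.boundary G (Pi.single e x) = Pi.single (Γ.tail e) x - Pi.single (Γ.head e) x := by
  ext v
  simp [boundary, Pi.single_apply, eq_comm]

variable [Fintype V]

lemma map_boundary_supportedOn (A : Finset E) :
    (supportedOn G A).map (Γ.boundary G) = ((Γ.subgraph A).componentSum G).ker := by
  classical
  apply le_antisymm
  · refine AddSubgroup.map_le_iff_le_comap.2 (supportedOn_le fun e he x => ?_)
    simp [boundary_single, SimpleGraph.componentSum_single, connectedComponentMk_tail_eq_head he]
  · refine SimpleGraph.ker_componentSum_le fun v w ⟨_, e, he, hvw⟩ x => ?_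
    rcases hvw with ⟨rfl, rfl⟩ | ⟨rfl, rfl⟩
    · exact ⟨_, single_mem_supportedOn he x, boundary_single e x⟩
    · refine ⟨_, single_mem_supportedOn he (-x), ?_⟩
      rw [boundary_single, Pi.single_neg, Pi.single_neg, neg_sub_neg]

lemma card_flows_supportedOn_mul [Finite G] (A : Finset E) :
    Nat.card {φ : E → G // (∀ e ∉ A, φ e = 0) ∧ Γ.boundary G φ = 0} *
      Nat.card G ^ Fintype.card V = Nat.card G ^ (A.card + Γ.k A) := by
  set f := (Γ.boundary G).domRestrict (supportedOn G A)
  set σ := (Γ.subgraph A).componentSum G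
  have hf :
      Nat.card {φ : E → G // (∀ e ∉ A, φ e = 0) ∧ Γ.boundary G φ = 0} = Nat.card f.ker :=
    Nat.card_congr <| (Equiv.subtypeSubtypeEquivSubtypeInter (· ∈ supportedOn G A)
      fun φ => Γ.boundary G φ = 0).symm.trans (Equiv.subtypeEquivRight fun φ => by
        simp [f, AddSubgroup.mem_addSubgroupOf])
  have hσ : Nat.card σ.ker * Nat.card G ^ Γ.k A = Nat.card G ^ Fintype.card V :=
    calc Nat.card σ.ker * Nat.card G ^ Γ.k A = Nat.card σ.ker * Nat.card σ.range := by
          rw [AddMonoidHom.range_eq_top.2 (SimpleGraph.componentSum_surjective _ _),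
            AddSubgroup.card_top, Nat.card_fun, k]
      _ = Nat.card G ^ Fintype.card V := by
          rw [σ.card_ker_mul_card_range, Nat.card_fun, Nat.card_eq_fintype_card (α := V)]
  have hrange : f.range = σ.ker := by
    rw [AddMonoidHom.domRestrict_range, map_boundary_supportedOn]
  calc _ = Nat.card f.ker * Nat.card f.range * Nat.card G ^ Γ.k A := by
        rw [hf, hrange, mul_assoc, hσ]
    _ = Nat.card G ^ (A.card + Γ.k A) := by
        rw [f.card_ker_mul_card_range, card_supportedOn, pow_add]

lemma card_flows_supportedOn [Finite G] (A : Finset E) :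
    Nat.card {φ : E → G // (∀ e ∉ A, φ e = 0) ∧ Γ.boundary G φ = 0} =
      Nat.card G ^ (A.card + Γ.k A - Fintype.card V) :=
  Nat.eq_pow_sub_of_mul_pow_eq Nat.card_pos.ne' (card_flows_supportedOn_mul A)

end Multigraph

/-- The number of nowhere-zero `G`-flows of a finite oriented multigraph `Γ`, for a finite
abelian group `G` of order `n`, equals
`∑_{A ⊆ E} (−1)^{|E∖A|} n^{|A| − |V| + k(A)}`. -/
theorem card_nowhere_zero_flows {V E : Type*} [Fintype V] [Fintype E] [DecidableEq V]
    (Γ : Multigraph V E) (G : Type*) [AddCommGroup G] [Fintype G]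
    (n : ℕ) (hn : Fintype.card G = n) :
    (Nat.card {φ : E → G // (∀ e, φ e ≠ 0) ∧ ∀ v : V,
        ∑ e ∈ Finset.univ.filter (fun e => Γ.tail e = v), φ e =
          ∑ e ∈ Finset.univ.filter (fun e => Γ.head e = v), φ e} : ℤ) =
      ∑ A : Finset E, (-1 : ℤ) ^ (Fintype.card E - A.card) *
        (n : ℤ) ^ (A.card + Γ.k A - Fintype.card V) := by
  rw [card_forall_ne_zero_eq_sum]
  refine sum_congr rfl fun A _ => ?_
  simp_rw [← Multigraph.boundary_eq_zero_iff, Multigraph.card_flows_supportedOn, ← hn,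
    Nat.card_eq_fintype_card, Nat.cast_pow]
end

section
/- The surface Tutte polynomial satisfies duality: 𝒯(M*; 𝐱, 𝐲) = 𝒯(M; 𝐲, 𝐱), where M* is the surface dual of the map M. -/
/-- The numerical parameters of a map (a graph 2-cell embedded in a disjoint union of closed
orientable surfaces, one per connected component): the numbers `v` of vertices, `e` of edges,
`f` of faces, and the multiset of genera of its connected components.  Every map has at least
one vertex and one face per component and satisfies Euler's relation
`v − e + f = 2k − 2g`, where `k` is the number of components and `g` the total genus. -/
structure MapData where
  v : ℕ
  e : ℕ
  f : ℕ
  compGenera : Multiset ℕ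
  le_v : compGenera.card ≤ v
  le_f : compGenera.card ≤ f
  euler : (v : ℤ) - e + f = 2 * compGenera.card - 2 * compGenera.sum

namespace MapData

/-- Number of connected components. -/
def k (M : MapData) : ℕ := M.compGenera.card

/-- Total genus: the sum of the genera of the connected components. -/
def g (M : MapData) : ℕ := M.compGenera.sum

/-- Nullity `n(M) = e − v + k`. -/
def nullity (M : MapData) : ℕ := M.e + M.k - M.v

/-- Dual nullity `n*(M) = e − f + k`. -/
def dualNullity (M : MapData) : ℕ := M.e + M.k - M.f

/-- Rank `r(M) = v − k`. -/
def rk (M : MapData) : ℕ := M.v - M.k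

/-- Dual rank `r*(M) = f − k`. -/
def dualRk (M : MapData) : ℕ := M.f - M.k

end MapData

/-- A map with edge set `E`, recorded through the parameters of all of its minors:
`contr A` records the parameters of the contraction `M/A`, and `restr A` those of the
restriction `M∖A^c` of `M` to the edges in `A`. -/
structure SMap (E : Type*) [Fintype E] [DecidableEq E] where
  contr : Finset E → MapData
  restr : Finset E → MapData

/-- The surface Tutte polynomial
`𝒯(M;𝐱,𝐲) = ∑_{A⊆E} x^{n*(M/A)} y^{n(M∖A^c)} ∏_i x_{g(M_i)} ∏_j y_{g(M_j)}`,
the products being over the connected components `M_i` of `M/A` and `M_j` of `M∖A^c`,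
evaluated in a commutative ring at `x`, `y` and `x_g = xs g`, `y_g = ys g`. -/
def surfTutte {E R : Type*} [Fintype E] [DecidableEq E] [CommRing R] (M : SMap E)
    (x y : R) (xs ys : ℕ → R) : R :=
  ∑ A : Finset E,
    x ^ (M.contr A).dualNullity * y ^ (M.restr A).nullity *
      ((M.contr A).compGenera.map xs).prod * ((M.restr A).compGenera.map ys).prod

/-- Duality for the surface Tutte polynomial: `𝒯(M*; 𝐱, 𝐲) = 𝒯(M; 𝐲, 𝐱)`, where `Mstar` is
the surface dual of `M`.  Edges of `M*` are identified with those of `M`; the dual satisfies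
`(M*/A) = (M∖A)*`, so `n*(M*/A) = n(M∖A)` and the connected components of `M*/A` correspond,
with equal genera, to those of `M∖A = M∖(Aᶜ)^c`, and dually for restrictions. -/
theorem surfTutte_duality {E R : Type*} [Fintype E] [DecidableEq E] [CommRing R]
    (M Mstar : SMap E)
    (h1 : ∀ A : Finset E, (Mstar.contr A).compGenera = (M.restr Aᶜ).compGenera)
    (h2 : ∀ A : Finset E, (Mstar.contr A).dualNullity = (M.restr Aᶜ).nullity)
    (h3 : ∀ A : Finset E, (Mstar.restr A).compGenera = (M.contr Aᶜ).compGenera)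
    (h4 : ∀ A : Finset E, (Mstar.restr A).nullity = (M.contr Aᶜ).dualNullity)
    (x y : R) (xs ys : ℕ → R) :
    surfTutte Mstar x y xs ys = surfTutte M y x ys xs := by
  unfold surfTutte
  refine Fintype.sum_equiv ⟨compl, compl, compl_compl, compl_compl⟩ _ _ fun A => ?_
  simp only [Equiv.coe_fn_mk, h1, h2, h3, h4]
  ring
end
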